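/- Let δ > 0 be real and let L > M ≥ 1 be natural numbers such that log(1+δ/2)/(L−M) ≤ (log 2)/M. Set θ* = √(3·log(1+δ/2)/(L−M)) and c = 1/2 − sin(2θ*)/(4θ*). Then (1 + c)^L − (1 + c)^M ≤ δ. -/

import Mathlib

/-!
Since `sin x ≥ x - x³/6`, the constant `c = 1/2 - sin(2θ*)/(4θ*)` lies in `[0, θ*²/3]`, and
`θ*²/3 = log(1 + δ/2)/(L - M)`. With `1 + c ≤ exp c` this gives `(1 + c)^(L-M) ≤ 1 + δ/2`, and
the hypothesis on `M` gives `(1 + c)^M ≤ 2`; hence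
`(1 + c)^L - (1 + c)^M = (1 + c)^M ((1 + c)^(L-M) - 1) ≤ 2 · δ/2`.
-/

open Real

lemma half_sub_sin_two_mul_div_le_sq_div_three {θ : ℝ} (hθ : 0 < θ) :
    1 / 2 - sin (2 * θ) / (4 * θ) ≤ θ ^ 2 / 3 := by
  have hsin := sin_ge_sub_cube (x := 2 * θ) (by positivity)
  rw [div_sub_div _ _ two_ne_zero (by positivity), div_le_div_iff₀ (by positivity) three_pos]
  nlinarith

lemma sin_two_mul_div_le_half {θ : ℝ} (hθ : 0 < θ) : sin (2 * θ) / (4 * θ) ≤ 1 / 2 := by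
  rw [div_le_iff₀ (by positivity)]
  linarith [sin_le (x := 2 * θ) (by positivity)]

lemma one_add_pow_le_of_mul_le_log {c a : ℝ} {n : ℕ} (hc : 0 ≤ 1 + c) (ha : 0 < a)
    (h : n * c ≤ log a) : (1 + c) ^ n ≤ a :=
  calc (1 + c) ^ n ≤ exp c ^ n := pow_le_pow_left₀ hc (by linarith [add_one_le_exp c]) n
    _ = exp (n * c) := (exp_nat_mul c n).symm
    _ ≤ exp (log a) := exp_le_exp.2 h
    _ = a := exp_log ha

lemma pow_sub_pow_le_mul {x A B : ℝ} {m n : ℕ} (hx : 1 ≤ x) (hmn : m ≤ n) (hA : x ^ m ≤ A)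
    (hB : x ^ (n - m) ≤ 1 + B) : x ^ n - x ^ m ≤ A * B := by
  rw [← pow_mul_pow_sub x hmn, ← mul_sub_one]
  exact mul_le_mul hA (by linarith) (sub_nonneg.2 (one_le_pow₀ hx)) <|
    (pow_nonneg (by linarith) m).trans hA

theorem spd_average_case_truncation_bound_general (δ : ℝ) (hδ : 0 < δ) (L M : ℕ)
    (hML : M < L)
    (h : Real.log (1 + δ / 2) / ((L : ℝ) - (M : ℝ)) ≤ Real.log 2 / (M : ℝ))
    (θstar c : ℝ)
    (hθ : θstar = Real.sqrt (3 * Real.log (1 + δ / 2) / ((L : ℝ) - (M : ℝ))))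
    (hc : c = 1 / 2 - Real.sin (2 * θstar) / (4 * θstar)) :
    (1 + c) ^ L - (1 + c) ^ M ≤ δ := by
  set t := log (1 + δ / 2) / ((L : ℝ) - M)
  have hLM : (0 : ℝ) < L - M := sub_pos.2 (by exact_mod_cast hML)
  have ht_pos : 0 < t := div_pos (log_pos (by linarith)) hLM
  have hθt : θstar = sqrt (3 * t) := by rw [hθ, mul_div_assoc]
  have hθ_pos : 0 < θstar := hθt ▸ sqrt_pos.2 (by linarith)
  have hθ_sq : θstar ^ 2 / 3 = t := by rw [hθt, sq_sqrt (by linarith)]; ring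
  have hc_nonneg : 0 ≤ c := hc ▸ sub_nonneg.2 (sin_two_mul_div_le_half hθ_pos)
  have hc_le : c ≤ t := hc ▸ hθ_sq ▸ half_sub_sin_two_mul_div_le_sq_div_three hθ_pos
  have hpow_M : (1 + c) ^ M ≤ 2 := by
    refine one_add_pow_le_of_mul_le_log (by linarith) two_pos ?_
    calc (M : ℝ) * c ≤ t * M := by rw [mul_comm]; gcongr
      _ ≤ log 2 := mul_le_of_le_div₀ (log_nonneg one_le_two) M.cast_nonneg h
  have hpow_LM : (1 + c) ^ (L - M) ≤ 1 + δ / 2 := by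
    refine one_add_pow_le_of_mul_le_log (by linarith) (by linarith) ?_
    calc ((L - M : ℕ) : ℝ) * c ≤ ((L : ℝ) - M) * t := by rw [Nat.cast_sub hML.le]; gcongr
      _ = log (1 + δ / 2) := mul_div_cancel₀ _ hLM.ne'
  calc (1 + c) ^ L - (1 + c) ^ M ≤ 2 * (δ / 2) :=
        pow_sub_pow_le_mul (by linarith) hML.le hpow_M hpow_LM
    _ = δ := by ring

/-- Average-case half of the paper's Theorem 1: for `δ > 0`, naturals `L > M ≥ 1` with
`log(1+δ/2)/(L−M) ≤ (log 2)/M`, setting `θ* = √(3·log(1+δ/2)/(L−M))` and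
`c = 1/2 − sin(2θ*)/(4θ*)` one has `(1 + c)^L − (1 + c)^M ≤ δ`. -/
theorem spd_average_case_truncation_bound (δ : ℝ) (hδ : 0 < δ) (L M : ℕ) (hM : 1 ≤ M)
    (hML : M < L)
    (h : Real.log (1 + δ / 2) / ((L : ℝ) - (M : ℝ)) ≤ Real.log 2 / (M : ℝ))
    (θstar c : ℝ)
    (hθ : θstar = Real.sqrt (3 * Real.log (1 + δ / 2) / ((L : ℝ) - (M : ℝ))))
    (hc : c = 1 / 2 - Real.sin (2 * θstar) / (4 * θstar)) :
    (1 + c) ^ L - (1 + c) ^ M ≤ δ :=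
  spd_average_case_truncation_bound_general δ hδ L M hML h θstar c hθ hc
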